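/- Assume n = 2. Then every *-structure on the Radford algebra H is of the form g* = g, x* = α₁₁x + α₁₂y, y* = α₂₁x + α₂₂y for some matrix A = (α_{ij}) ∈ M₂(ℂ) satisfying Ā·A = I₂, where Ā denotes the entrywise complex conjugate of A. -/

import Mathlib

open TensorProduct

noncomputable section

/-- The Gaussian (`q`-)binomial coefficient `C(m, k)_q`, defined by the `q`-Pascal
recurrence `C(m+1, k+1)_q = C(m, k)_q + q^(k+1) * C(m, k+1)_q`. -/
def qBinom (q : ℂ) : ℕ → ℕ → ℂ
  | _, 0 => 1
  | 0, _ + 1 => 0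
  | m + 1, k + 1 => qBinom q m k + q ^ (k + 1) * qBinom q m (k + 1)

/-- The Radford algebra: a Hopf algebra `H` over `ℂ` generated by elements
`g, x, y` subject to the relations `g^n = 1`, `x^n = y^n = 0`, `xg = ω g x`,
`g y = ω y g`, `x y = ω y x`, where `ω` is a root of unity of order `n > 1`,
with the comultiplication, counit and antipode determined by
`Δ(g) = g ⊗ g`, `ε(g) = 1`, `S(g) = g^(n-1)`,
`Δ(x) = x ⊗ g + 1 ⊗ x`, `ε(x) = 0`, `S(x) = -x g^(n-1)`,
`Δ(y) = y ⊗ g + 1 ⊗ y`, `ε(y) = 0`, `S(y) = -y g^(n-1)`,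
and with canonical `ℂ`-basis `{y^r x^s g^l | 0 ≤ r, s, l < n}`. -/
structure RadfordAlgebra (n : ℕ) (ω : ℂ) (H : Type*) [Ring H] [HopfAlgebra ℂ H] where
  g : H
  x : H
  y : H
  hn : 1 < n
  hω : IsPrimitiveRoot ω n
  g_pow : g ^ n = 1
  x_pow : x ^ n = 0
  y_pow : y ^ n = 0
  rel_xg : x * g = ω • (g * x)
  rel_gy : g * y = ω • (y * g)
  rel_xy : x * y = ω • (y * x)
  comul_g : Coalgebra.comul (R := ℂ) g = g ⊗ₜ[ℂ] g
  counit_g : Coalgebra.counit (R := ℂ) g = 1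
  antipode_g : HopfAlgebra.antipode (R := ℂ) g = g ^ (n - 1)
  comul_x : Coalgebra.comul (R := ℂ) x = x ⊗ₜ[ℂ] g + 1 ⊗ₜ[ℂ] x
  counit_x : Coalgebra.counit (R := ℂ) x = 0
  antipode_x : HopfAlgebra.antipode (R := ℂ) x = -(x * g ^ (n - 1))
  comul_y : Coalgebra.comul (R := ℂ) y = y ⊗ₜ[ℂ] g + 1 ⊗ₜ[ℂ] y
  counit_y : Coalgebra.counit (R := ℂ) y = 0
  antipode_y : HopfAlgebra.antipode (R := ℂ) y = -(y * g ^ (n - 1))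
  gen : Algebra.adjoin ℂ ({g, x, y} : Set H) = ⊤
  basis : Module.Basis (Fin n × Fin n × Fin n) ℂ H
  basis_eq : ∀ r s l : Fin n, basis (r, s, l) = y ^ (r : ℕ) * x ^ (s : ℕ) * g ^ (l : ℕ)

/-- A `*`-structure on a Hopf algebra `H` over `ℂ`: a conjugate-linear map
`* : H → H` such that `(h*)* = h`, `(hl)* = l* h*`,
`Δ(h*) = Σ (h₁)* ⊗ (h₂)*` and `S(S(h*)*) = h` for all `h, l ∈ H`.
(The condition on `Δ` is expressed via the auxiliary additive map `starTensor`
on `H ⊗[ℂ] H` sending `a ⊗ b` to `a* ⊗ b*`, which is uniquely determined by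
its two defining properties.) -/
structure HopfStarStructure (H : Type*) [Ring H] [HopfAlgebra ℂ H] where
  star : H → H
  star_add : ∀ a b : H, star (a + b) = star a + star b
  star_smul : ∀ (c : ℂ) (a : H), star (c • a) = (starRingEnd ℂ c) • star a
  star_star : ∀ a : H, star (star a) = a
  star_mul : ∀ a b : H, star (a * b) = star b * star a
  starTensor : H ⊗[ℂ] H → H ⊗[ℂ] H
  starTensor_add : ∀ u v : H ⊗[ℂ] H, starTensor (u + v) = starTensor u + starTensor v
  starTensor_tmul : ∀ a b : H, starTensor (a ⊗ₜ[ℂ] b) = star a ⊗ₜ[ℂ] star b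
  comul_star : ∀ a : H,
    Coalgebra.comul (R := ℂ) (star a) = starTensor (Coalgebra.comul (R := ℂ) a)
  antipode_star : ∀ a : H,
    HopfAlgebra.antipode (R := ℂ) (star (HopfAlgebra.antipode (R := ℂ) (star a))) = a

/-- Two `*`-structures `*'` and `*''` on a Hopf algebra `H` over `ℂ` are
equivalent if there is a Hopf algebra automorphism `ψ` of `H` such that
`ψ(h^{*'}) = ψ(h)^{*''}` for all `h ∈ H`. -/
def HopfStarStructure.Equivalent {H : Type*} [Ring H] [HopfAlgebra ℂ H]
    (s₁ s₂ : HopfStarStructure H) : Prop :=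
  ∃ ψ : H ≃ₐc[ℂ] H, ∀ h : H, ψ (s₁.star h) = s₂.star (ψ h)

/-! A `*`-structure is a conjugate-linear anti-automorphism, so it fixes `1`; being compatible
with `Δ`, it maps group-likes to group-likes and `(g, 1)`-skew primitives (`Δ w = w ⊗ g + 1 ⊗ w`)
to `(g*, 1)`-skew primitives. For `n = 2`, comparing coefficients in the basis `y^r x^s g^l` shows
that the group-likes of `H` are `1` and `g` (the coefficient of `b ⊗ b` in `Δ h = h ⊗ h` is the
square of the coefficient of `b` in `h`, and no `Δ (y^r x^s g^l)` with `r + s > 0` has a diagonal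
term), so `g* = g`; and that the `(g, 1)`-skew primitives are the `a (1 - g) + p x + q y`. Such a
`w` satisfies `w² = 2 a w`, so `x*² = (x²)* = 0` forces `x* ∈ span {x, y}`, and likewise `y*`.
Writing `A` for the matrix of `*` on `span {x, y}`, involutivity of `*` reads `Ā A = 1`. -/

lemma isGroupLikeElem_of_comul_eq_tmul_self {K A : Type*} [Field K] [AddCommGroup A] [Module K A]
    [Coalgebra K A] {a : A} (ha : Coalgebra.comul (R := K) a = a ⊗ₜ[K] a) (ha₀ : a ≠ 0) :
    IsGroupLikeElem K a := by
  refine ⟨smul_left_injective K ha₀ ?_, ha⟩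
  simpa [ha] using congrArg (TensorProduct.rid K A) (Coalgebra.lTensor_counit_comul (R := K) a)

namespace HopfStarStructure

variable {H : Type*} [Ring H] [HopfAlgebra ℂ H] (st : HopfStarStructure H)

def starLinearEquiv : H ≃ₗ⋆[ℂ] H where
  toFun := st.star
  invFun := st.star
  map_add' := st.star_add
  map_smul' := st.star_smul
  left_inv := st.star_star
  right_inv := st.star_star

@[simp]
lemma starLinearEquiv_apply (a : H) : st.starLinearEquiv a = st.star a := rfl

@[simp]
lemma star_zero : st.star 0 = 0 := st.starLinearEquiv.map_zero

lemma star_injective : Function.Injective st.star := st.starLinearEquiv.injective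

@[simp]
lemma star_eq_zero {a : H} : st.star a = 0 ↔ a = 0 := st.starLinearEquiv.map_eq_zero_iff

@[simp]
lemma star_one : st.star 1 = 1 := by
  calc st.star 1 = st.star 1 * st.star (st.star 1) := by rw [st.star_star, mul_one]
    _ = 1 := by rw [← st.star_mul, mul_one, st.star_star]

lemma isGroupLikeElem_star {a : H} (ha : IsGroupLikeElem ℂ a) : IsGroupLikeElem ℂ (st.star a) :=
  isGroupLikeElem_of_comul_eq_tmul_self
    (by rw [st.comul_star, ha.comul_eq_tmul_self, st.starTensor_tmul])
    (st.star_eq_zero.not.mpr ha.ne_zero)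

lemma comul_star_of_comul_eq {a b : H}
    (ha : Coalgebra.comul (R := ℂ) a = a ⊗ₜ[ℂ] b + 1 ⊗ₜ[ℂ] a) :
    Coalgebra.comul (R := ℂ) (st.star a) =
      st.star a ⊗ₜ[ℂ] st.star b + 1 ⊗ₜ[ℂ] st.star a := by
  rw [st.comul_star, ha, st.starTensor_add, st.starTensor_tmul, st.starTensor_tmul, st.star_one]

lemma map_starRingEnd_mul_eq_one {ι : Type*} [Fintype ι] [DecidableEq ι] {v : ι → H}
    (hv : LinearIndependent ℂ v) {A : Matrix ι ι ℂ}
    (hA : ∀ i, st.star (v i) = ∑ j, A i j • v j) :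
    A.map (starRingEnd ℂ) * A = 1 := by
  have hcoeff : ∀ i, ∑ k, (A.map (starRingEnd ℂ) * A) i k • v k =
      ∑ k, (1 : Matrix ι ι ℂ) i k • v k := by
    intro i
    calc ∑ k, (A.map (starRingEnd ℂ) * A) i k • v k
        = st.starLinearEquiv (st.star (v i)) := by
          simp only [hA, map_sum, map_smulₛₗ, starLinearEquiv_apply, Finset.smul_sum, smul_smul,
            Matrix.mul_apply, Matrix.map_apply, Finset.sum_smul]
          exact Finset.sum_comm
      _ = ∑ k, (1 : Matrix ι ι ℂ) i k • v k := by
          simp [st.star_star, Matrix.one_apply]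
  ext i k
  exact Fintype.linearIndependent_iffₛ.mp hv _ _ (hcoeff i) k

end HopfStarStructure

namespace RadfordAlgebra

variable {ω : ℂ} {H : Type*} [Ring H] [HopfAlgebra ℂ H] (R : RadfordAlgebra 2 ω H)

include R in
lemma omega_smul (a : H) : ω • a = -a := by
  rw [R.hω.eq_neg_one_of_two_right, neg_one_smul]

lemma g_mul_g : R.g * R.g = 1 := by rw [← pow_two, R.g_pow]

lemma x_mul_x : R.x * R.x = 0 := by rw [← pow_two, R.x_pow]

lemma y_mul_y : R.y * R.y = 0 := by rw [← pow_two, R.y_pow]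

lemma g_mul_x : R.g * R.x = -(R.x * R.g) := by
  rw [R.rel_xg, R.omega_smul, neg_neg]

lemma g_mul_y : R.g * R.y = -(R.y * R.g) := by
  rw [R.rel_gy, R.omega_smul]

lemma x_mul_y : R.x * R.y = -(R.y * R.x) := by
  rw [R.rel_xy, R.omega_smul]

lemma eq_sum_basis (h : H) :
    h = R.basis.repr h (0,0,0) • 1 + R.basis.repr h (0,0,1) • R.g
      + R.basis.repr h (0,1,0) • R.x + R.basis.repr h (0,1,1) • (R.x * R.g)
      + R.basis.repr h (1,0,0) • R.y + R.basis.repr h (1,0,1) • (R.y * R.g)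
      + R.basis.repr h (1,1,0) • (R.y * R.x) + R.basis.repr h (1,1,1) • (R.y * R.x * R.g) := by
  conv_lhs => rw [← R.basis.sum_repr h]
  simp [Fintype.sum_prod_type, R.basis_eq, add_assoc]

@[simp]
lemma repr_one : R.basis.repr 1 = Finsupp.single (0,0,0) 1 := by
  simpa [R.basis_eq] using R.basis.repr_self (0,0,0)

@[simp]
lemma repr_g : R.basis.repr R.g = Finsupp.single (0,0,1) 1 := by
  simpa [R.basis_eq] using R.basis.repr_self (0,0,1)

@[simp]
lemma repr_x : R.basis.repr R.x = Finsupp.single (0,1,0) 1 := by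
  simpa [R.basis_eq] using R.basis.repr_self (0,1,0)

@[simp]
lemma repr_x_mul_g : R.basis.repr (R.x * R.g) = Finsupp.single (0,1,1) 1 := by
  simpa [R.basis_eq] using R.basis.repr_self (0,1,1)

@[simp]
lemma repr_y : R.basis.repr R.y = Finsupp.single (1,0,0) 1 := by
  simpa [R.basis_eq] using R.basis.repr_self (1,0,0)

@[simp]
lemma repr_y_mul_g : R.basis.repr (R.y * R.g) = Finsupp.single (1,0,1) 1 := by
  simpa [R.basis_eq] using R.basis.repr_self (1,0,1)

@[simp]
lemma repr_y_mul_x : R.basis.repr (R.y * R.x) = Finsupp.single (1,1,0) 1 := by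
  simpa [R.basis_eq] using R.basis.repr_self (1,1,0)

@[simp]
lemma repr_y_mul_x_mul_g : R.basis.repr (R.y * R.x * R.g) = Finsupp.single (1,1,1) 1 := by
  simpa [R.basis_eq] using R.basis.repr_self (1,1,1)

lemma comul_x_mul_g :
    Coalgebra.comul (R := ℂ) (R.x * R.g) =
      (R.x * R.g) ⊗ₜ[ℂ] 1 + R.g ⊗ₜ[ℂ] (R.x * R.g) := by
  simp [R.comul_x, R.comul_g, add_mul, R.g_mul_g]

lemma comul_y_mul_g :
    Coalgebra.comul (R := ℂ) (R.y * R.g) =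
      (R.y * R.g) ⊗ₜ[ℂ] 1 + R.g ⊗ₜ[ℂ] (R.y * R.g) := by
  simp [R.comul_y, R.comul_g, add_mul, R.g_mul_g]

lemma comul_y_mul_x :
    Coalgebra.comul (R := ℂ) (R.y * R.x) = (R.y * R.x) ⊗ₜ[ℂ] 1 - R.y ⊗ₜ[ℂ] (R.x * R.g)
      + R.x ⊗ₜ[ℂ] (R.y * R.g) + 1 ⊗ₜ[ℂ] (R.y * R.x) := by
  simp only [Bialgebra.comul_mul, R.comul_x, R.comul_y, add_mul, mul_add,
    Algebra.TensorProduct.tmul_mul_tmul, R.g_mul_g, R.g_mul_x, one_mul, mul_one, tmul_neg]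
  abel

lemma comul_y_mul_x_mul_g :
    Coalgebra.comul (R := ℂ) (R.y * R.x * R.g) =
      (R.y * R.x * R.g) ⊗ₜ[ℂ] R.g - (R.y * R.g) ⊗ₜ[ℂ] R.x + (R.x * R.g) ⊗ₜ[ℂ] R.y
        + R.g ⊗ₜ[ℂ] (R.y * R.x * R.g) := by
  rw [Bialgebra.comul_mul, R.comul_y_mul_x, R.comul_g]
  simp only [add_mul, sub_mul, Algebra.TensorProduct.tmul_mul_tmul, one_mul, mul_assoc,
    R.g_mul_g, mul_one]

lemma comul_eq_sum (h : H) :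
    Coalgebra.comul (R := ℂ) h = R.basis.repr h (0,0,0) • (1 ⊗ₜ[ℂ] 1)
      + R.basis.repr h (0,0,1) • (R.g ⊗ₜ[ℂ] R.g)
      + R.basis.repr h (0,1,0) • (R.x ⊗ₜ[ℂ] R.g + 1 ⊗ₜ[ℂ] R.x)
      + R.basis.repr h (0,1,1) • ((R.x * R.g) ⊗ₜ[ℂ] 1 + R.g ⊗ₜ[ℂ] (R.x * R.g))
      + R.basis.repr h (1,0,0) • (R.y ⊗ₜ[ℂ] R.g + 1 ⊗ₜ[ℂ] R.y)
      + R.basis.repr h (1,0,1) • ((R.y * R.g) ⊗ₜ[ℂ] 1 + R.g ⊗ₜ[ℂ] (R.y * R.g))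
      + R.basis.repr h (1,1,0) • ((R.y * R.x) ⊗ₜ[ℂ] 1 - R.y ⊗ₜ[ℂ] (R.x * R.g)
          + R.x ⊗ₜ[ℂ] (R.y * R.g) + 1 ⊗ₜ[ℂ] (R.y * R.x))
      + R.basis.repr h (1,1,1) • ((R.y * R.x * R.g) ⊗ₜ[ℂ] R.g - (R.y * R.g) ⊗ₜ[ℂ] R.x
          + (R.x * R.g) ⊗ₜ[ℂ] R.y + R.g ⊗ₜ[ℂ] (R.y * R.x * R.g)) := by
  conv_lhs => rw [R.eq_sum_basis h]
  simp only [map_add, map_smul, Bialgebra.comul_one, Algebra.TensorProduct.one_def, R.comul_g,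
    R.comul_x, R.comul_y, R.comul_x_mul_g, R.comul_y_mul_g, R.comul_y_mul_x,
    R.comul_y_mul_x_mul_g]

lemma repr_eq_zero_of_isGroupLikeElem {h : H} (hh : IsGroupLikeElem ℂ h)
    {p : Fin 2 × Fin 2 × Fin 2} (hp : (p.1, p.2.1) ≠ (0, 0)) : R.basis.repr h p = 0 := by
  have key := congrArg (fun t => (R.basis.tensorProduct R.basis).repr t (p, p))
    hh.comul_eq_tmul_self
  simp only [R.comul_eq_sum] at key
  fin_cases p <;> simp_all

lemma isGroupLikeElem_g : IsGroupLikeElem ℂ R.g := ⟨R.counit_g, R.comul_g⟩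

lemma isGroupLikeElem_iff {h : H} : IsGroupLikeElem ℂ h ↔ h = 1 ∨ h = R.g := by
  refine ⟨fun hh => ?_, by rintro (rfl | rfl); exacts [.one, R.isGroupLikeElem_g]⟩
  have hh₀₁ : h = R.basis.repr h (0,0,0) • 1 + R.basis.repr h (0,0,1) • R.g := by
    conv_lhs => rw [R.eq_sum_basis h]
    simp [R.repr_eq_zero_of_isGroupLikeElem hh]
  have hmul : R.basis.repr h (0,0,1) * R.basis.repr h (0,0,0) = 0 := by
    have key := congrArg (fun t => (R.basis.tensorProduct R.basis).repr t ((0,0,0), (0,0,1)))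
      hh.comul_eq_tmul_self
    rw [hh₀₁] at key
    simpa [Algebra.TensorProduct.one_def, R.comul_g] using key.symm
  have hsum : R.basis.repr h (0,0,0) + R.basis.repr h (0,0,1) = 1 := by
    have hε := hh.counit_eq_one
    rw [hh₀₁] at hε
    simpa [R.counit_g] using hε
  rcases mul_eq_zero.mp hmul with h₁ | h₀
  · left; simpa [h₁, show R.basis.repr h (0,0,0) = 1 by simpa [h₁] using hsum] using hh₀₁
  · right; simpa [h₀, show R.basis.repr h (0,0,1) = 1 by simpa [h₀] using hsum] using hh₀₁

lemma g_ne_one : R.g ≠ 1 := by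
  intro h
  simpa using congrArg (fun t => R.basis.repr t (0,0,1)) h

lemma exists_eq_smul_one_sub_g_add_of_comul_eq {w : H}
    (hw : Coalgebra.comul (R := ℂ) w = w ⊗ₜ[ℂ] R.g + 1 ⊗ₜ[ℂ] w) :
    ∃ a p q : ℂ, w = a • (1 - R.g) + p • R.x + q • R.y := by
  have coeff := fun p q => congrArg (fun t => (R.basis.tensorProduct R.basis).repr t (p, q)) hw
  have h₀₁ := coeff (0,0,0) (0,0,1)
  have h₀₁₁ := coeff (0,1,1) (0,0,0)
  have h₁₀₁ := coeff (1,0,1) (0,0,0)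
  have h₁₁₀ := coeff (1,1,0) (0,0,0)
  have h₁₁₁ := coeff (0,0,1) (1,1,1)
  simp [R.comul_eq_sum] at h₀₁ h₀₁₁ h₁₀₁ h₁₁₀ h₁₁₁
  refine ⟨R.basis.repr w (0,0,0), R.basis.repr w (0,1,0), R.basis.repr w (1,0,0), ?_⟩
  conv_lhs => rw [R.eq_sum_basis w]
  rw [h₀₁₁, h₁₀₁, h₁₁₀, h₁₁₁, eq_neg_of_add_eq_zero_right h₀₁.symm]
  module

lemma mul_self_eq_two_mul_smul {w : H} {a p q : ℂ}
    (hw : w = a • (1 - R.g) + p • R.x + q • R.y) : w * w = (2 * a) • w := by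
  subst hw
  simp only [add_mul, mul_add, sub_mul, mul_sub, smul_mul_assoc, mul_smul_comm, one_mul,
    mul_one, R.g_mul_g, R.x_mul_x, R.y_mul_y, R.g_mul_x, R.g_mul_y, R.x_mul_y, smul_zero]
  module

lemma exists_eq_smul_x_add_smul_y {w : H}
    (hw : Coalgebra.comul (R := ℂ) w = w ⊗ₜ[ℂ] R.g + 1 ⊗ₜ[ℂ] w) (hw₂ : w * w = 0) :
    ∃ p q : ℂ, w = p • R.x + q • R.y := by
  obtain ⟨a, p, q, rfl⟩ := R.exists_eq_smul_one_sub_g_add_of_comul_eq hw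
  rw [R.mul_self_eq_two_mul_smul rfl, smul_eq_zero] at hw₂
  rcases hw₂ with ha | hw₀
  · exact ⟨p, q, by rw [(mul_eq_zero.mp ha).resolve_left two_ne_zero, zero_smul, zero_add]⟩
  · exact ⟨0, 0, by rw [hw₀, zero_smul, zero_smul, add_zero]⟩

lemma linearIndependent_x_y : LinearIndependent ℂ ![R.x, R.y] := by
  convert R.basis.linearIndependent.comp ![(0,1,0), (1,0,0)] (by decide) using 1
  ext i
  fin_cases i <;> simp [R.basis_eq]

lemma star_g (st : HopfStarStructure H) : st.star R.g = R.g := by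
  rcases R.isGroupLikeElem_iff.mp (st.isGroupLikeElem_star R.isGroupLikeElem_g) with h | h
  · exact absurd (st.star_injective (h.trans st.star_one.symm)) R.g_ne_one
  · exact h

lemma exists_star_eq_smul_x_add_smul_y (st : HopfStarStructure H) {a : H}
    (ha : Coalgebra.comul (R := ℂ) a = a ⊗ₜ[ℂ] R.g + 1 ⊗ₜ[ℂ] a) (ha₂ : a * a = 0) :
    ∃ p q : ℂ, st.star a = p • R.x + q • R.y :=
  R.exists_eq_smul_x_add_smul_y (by rw [st.comul_star_of_comul_eq ha, R.star_g st])
    (by rw [← st.star_mul, ha₂, st.star_zero])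

end RadfordAlgebra

/-- for `n = 2`, every `*`-structure on the Radford algebra `H`
is of the form `g* = g`, `x* = α₁₁ x + α₁₂ y`, `y* = α₂₁ x + α₂₂ y` for some
matrix `A = (α_{ij}) ∈ M₂(ℂ)` with `Ā A = I₂`. -/
theorem radford_star_classification_of_eq_two
    {ω : ℂ} {H : Type*} [Ring H] [HopfAlgebra ℂ H]
    (R : RadfordAlgebra 2 ω H) (st : HopfStarStructure H) :
    ∃ A : Matrix (Fin 2) (Fin 2) ℂ, A.map (starRingEnd ℂ) * A = 1 ∧
      st.star R.g = R.g ∧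
      st.star R.x = A 0 0 • R.x + A 0 1 • R.y ∧
      st.star R.y = A 1 0 • R.x + A 1 1 • R.y := by
  have hrow : ∀ i, ∃ r : Fin 2 → ℂ,
      st.star (![R.x, R.y] i) = ∑ j, r j • ![R.x, R.y] j := by
    intro i
    obtain ⟨p, q, hpq⟩ := R.exists_star_eq_smul_x_add_smul_y st (a := ![R.x, R.y] i)
      (by fin_cases i <;> simp [R.comul_x, R.comul_y])
      (by fin_cases i <;> simp [R.x_mul_x, R.y_mul_y])
    exact ⟨![p, q], by simp [hpq, Fin.sum_univ_two]⟩
  choose A hA using hrow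
  refine ⟨A, st.map_starRingEnd_mul_eq_one R.linearIndependent_x_y hA, R.star_g st, ?_, ?_⟩
  · simpa [Fin.sum_univ_two] using hA 0
  · simpa [Fin.sum_univ_two] using hA 1
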